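/- arXiv:2203.08389 — 4 statements merged into one kernel-verified Lean document; each statement's English description precedes it below -/
import Mathlib

section
/- For ordered distinct points d₁ < d₂ < ... < d_N in ℝ and the exponential kernel correlation matrix R with entries R_{ij} = exp(−|d_i − d_j|/γ), γ > 0, the matrix L̃ defined as the lower bidiagonal matrix with diagonal entries L̃_{kk} = 1/√(1−ρ_k²) for k < N, L̃_{NN} = 1, and subdiagonal entries L̃_{k+1,k} = −ρ_k/√(1−ρ_k²) where ρ_k = exp(−(d_{k+1}−d_k)/γ), satisfies L̃ L̃ᵀ = R⁻¹. In particular, R⁻¹ is tridiagonal. -/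
/-!
Write `k(x, y) = exp (-|x - y| / γ)`. For `x ≤ y ≤ z` the kernel factorises,
`k(x, z) = k(x, y) k(y, z)` (the Markov property of the Ornstein–Uhlenbeck process), so
`R m j = ρ_j R m (j+1)` whenever `m > j`. Column `j` of `L̃` is
`(e_j - ρ_j e_{j+1}) / √(1 - ρ_j²)`, hence `R L̃` is upper triangular, with diagonal entries
`√(1 - ρ_j²)` (and `1` in the last column). Thus `L̃ᵀ R L̃` is upper triangular with unit diagonal;
being symmetric, it is the identity, and `R⁻¹ = L̃ L̃ᵀ` is tridiagonal because `L̃` is bidiagonal.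
-/

open Matrix

namespace Matrix

section Triangular

variable {n α : Type*} [LinearOrder n]

theorem IsUpperTriangular.mul_apply_self [Fintype n] [NonUnitalNonAssocSemiring α]
    {M N : Matrix n n α} (hM : M.IsUpperTriangular) (hN : N.IsUpperTriangular) (i : n) :
    (M * N) i i = M i i * N i i := by
  rw [mul_apply]
  refine Finset.sum_eq_single i (fun k _ hk => ?_) (by simp)
  rcases hk.lt_or_gt with h | h
  · rw [hM h, zero_mul]
  · rw [hN h, mul_zero]

theorem IsUpperTriangular.eq_one_of_isSymm [DecidableEq n] [Zero α] [One α] {M : Matrix n n α}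
    (hM : M.IsUpperTriangular) (hsymm : M.IsSymm) (hdiag : ∀ i, M i i = 1) : M = 1 := by
  ext i j
  rcases lt_trichotomy i j with h | rfl | h
  · rw [← hsymm.apply, hM h, one_apply_ne h.ne]
  · rw [hdiag, one_apply_eq]
  · rw [hM h, one_apply_ne h.ne']

end Triangular

theorem IsSymm.transpose_mul_mul {n α : Type*} [Fintype n] [CommSemiring α] {R : Matrix n n α}
    (hR : R.IsSymm) (L : Matrix n n α) : (Lᵀ * R * L).IsSymm := by
  rw [IsSymm, transpose_mul, transpose_mul, transpose_transpose, hR.eq, Matrix.mul_assoc]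

theorem inv_eq_mul_transpose_of_transpose_mul_mul_eq_one {n α : Type*} [Fintype n] [DecidableEq n]
    [CommRing α] {R L : Matrix n n α} (h : Lᵀ * R * L = 1) : R⁻¹ = L * Lᵀ :=
  inv_eq_left_inv (by rw [Matrix.mul_assoc]; exact mul_eq_one_comm.mp h)

end Matrix

def bidiagonal {α : Type*} [Zero α] (N : ℕ) (a b : ℕ → α) : Matrix (Fin N) (Fin N) α :=
  of fun i j => if i = j then a i else if (i : ℕ) = j + 1 then b j else 0

section Bidiagonal

variable {N : ℕ} {α : Type*} {a b : ℕ → α}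

theorem bidiagonal_apply_eq_zero [Zero α] {i j : Fin N} (h : ¬((j : ℕ) ≤ i ∧ (i : ℕ) ≤ j + 1)) :
    bidiagonal N a b i j = 0 := by
  rw [bidiagonal, of_apply, if_neg (by rintro rfl; omega), if_neg (by omega)]

theorem isUpperTriangular_transpose_bidiagonal [Zero α] :
    (bidiagonal N a b)ᵀ.IsUpperTriangular := fun i j (h : j < i) =>
  bidiagonal_apply_eq_zero (by simp only [Fin.lt_def] at h; omega)

theorem mul_bidiagonal_apply [NonUnitalNonAssocSemiring α] (M : Matrix (Fin N) (Fin N) α)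
    (m j : Fin N) : (M * bidiagonal N a b) m j =
      M m j * a j + if h : (j : ℕ) + 1 < N then M m ⟨j + 1, h⟩ * b j else 0 := by
  rw [mul_apply]
  split_ifs with h
  · refine Finset.sum_eq_add j ⟨j + 1, h⟩ (by simp [Fin.ext_iff]) (fun k _ hk => ?_)
      (by simp) (by simp) |>.trans ?_
    · rw [bidiagonal_apply_eq_zero (by simp only [ne_eq, Fin.ext_iff] at hk; omega), mul_zero]
    · simp [bidiagonal, Fin.ext_iff]
  · refine (Finset.sum_eq_single j (fun k _ hk => ?_) (by simp)).trans (by simp [bidiagonal])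
    rw [bidiagonal_apply_eq_zero (by simp only [ne_eq, Fin.ext_iff] at hk; omega), mul_zero]

theorem bidiagonal_mul_transpose_apply_eq_zero [NonUnitalNonAssocSemiring α] {i j : Fin N}
    (hij : (i : ℕ) + 1 < j ∨ (j : ℕ) + 1 < i) :
    (bidiagonal N a b * (bidiagonal N a b)ᵀ) i j = 0 := by
  refine (mul_apply ..).trans <| Finset.sum_eq_zero fun k _ => ?_
  by_cases hk : (k : ℕ) ≤ i ∧ (i : ℕ) ≤ k + 1
  · rw [transpose_apply, bidiagonal_apply_eq_zero (i := j) (j := k) (by omega), mul_zero]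
  · rw [bidiagonal_apply_eq_zero hk, zero_mul]

end Bidiagonal

noncomputable def expKernel (γ x y : ℝ) : ℝ := Real.exp (-|x - y| / γ)

section ExpKernel

variable {γ : ℝ}

theorem expKernel_self (γ x : ℝ) : expKernel γ x x = 1 := by
  simp [expKernel]

theorem expKernel_comm (γ x y : ℝ) : expKernel γ x y = expKernel γ y x := by
  rw [expKernel, expKernel, abs_sub_comm]

theorem expKernel_of_le {x y : ℝ} (h : x ≤ y) : expKernel γ x y = Real.exp (-(y - x) / γ) := by
  rw [expKernel, abs_sub_comm, abs_of_nonneg (sub_nonneg.mpr h)]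

theorem expKernel_mul_of_le {x y z : ℝ} (hxy : x ≤ y) (hyz : y ≤ z) :
    expKernel γ x y * expKernel γ y z = expKernel γ x z := by
  rw [expKernel_of_le hxy, expKernel_of_le hyz, expKernel_of_le (hxy.trans hyz), ← Real.exp_add]
  ring_nf

theorem expKernel_pos (γ x y : ℝ) : 0 < expKernel γ x y :=
  Real.exp_pos _

theorem expKernel_lt_one (hγ : 0 < γ) {x y : ℝ} (h : x ≠ y) : expKernel γ x y < 1 :=
  Real.exp_lt_one_iff.mpr (div_neg_of_neg_of_pos (neg_neg_of_pos (abs_sub_pos.mpr h)) hγ)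

end ExpKernel

section ExpKernelMatrix

variable {N : ℕ} {γ : ℝ} {d ρ a b : ℕ → ℝ} {R : Matrix (Fin N) (Fin N) ℝ}

theorem isUpperTriangular_expKernel_mul_bidiagonal (hd : Monotone d)
    (hR : ∀ i j : Fin N, R i j = expKernel γ (d i) (d j))
    (hρ : ∀ k, ρ k = expKernel γ (d k) (d (k + 1))) (hab : ∀ j, j + 1 < N → b j = -ρ j * a j) :
    (R * bidiagonal N a b).IsUpperTriangular := by
  intro m j (hjm : j < m)
  have hjN : (j : ℕ) + 1 < N := by omega
  have hmarkov : R m j = ρ j * R m ⟨j + 1, hjN⟩ := by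
    rw [hR, hR, hρ, expKernel_comm _ (d m), expKernel_comm _ (d m),
      expKernel_mul_of_le (hd (Nat.le_succ _)) (hd (show (j : ℕ) + 1 ≤ m by omega))]
  rw [mul_bidiagonal_apply, dif_pos hjN, hab _ hjN, hmarkov]
  ring

theorem expKernel_mul_bidiagonal_apply_self
    (hR : ∀ i j : Fin N, R i j = expKernel γ (d i) (d j))
    (hρ : ∀ k, ρ k = expKernel γ (d k) (d (k + 1))) (hab : ∀ j, j + 1 < N → b j = -ρ j * a j)
    (j : Fin N) :
    (R * bidiagonal N a b) j j = if (j : ℕ) + 1 < N then a j * (1 - ρ j ^ 2) else a j := by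
  rw [mul_bidiagonal_apply]
  split_ifs with hjN
  · rw [hab _ hjN, hR, hR, expKernel_self, ← hρ]
    ring
  · rw [hR, expKernel_self, one_mul, add_zero]

theorem transpose_mul_expKernel_mul_bidiagonal_eq_one (hd : Monotone d)
    (hR : ∀ i j : Fin N, R i j = expKernel γ (d i) (d j))
    (hρ : ∀ k, ρ k = expKernel γ (d k) (d (k + 1))) (hab : ∀ j, j + 1 < N → b j = -ρ j * a j)
    (ha : ∀ j, j + 1 < N → a j ^ 2 * (1 - ρ j ^ 2) = 1) (ha_last : ∀ j, j + 1 = N → a j ^ 2 = 1) :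
    (bidiagonal N a b)ᵀ * R * bidiagonal N a b = 1 := by
  have hRL := isUpperTriangular_expKernel_mul_bidiagonal hd hR hρ hab
  have hR_symm : R.IsSymm := IsSymm.ext fun i j => by rw [hR, hR, expKernel_comm]
  refine IsUpperTriangular.eq_one_of_isSymm ?_ (hR_symm.transpose_mul_mul _) fun j => ?_
  · rw [Matrix.mul_assoc]
    exact isUpperTriangular_transpose_bidiagonal.mul hRL
  rw [Matrix.mul_assoc, isUpperTriangular_transpose_bidiagonal.mul_apply_self hRL,
    transpose_apply, expKernel_mul_bidiagonal_apply_self hR hρ hab]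
  split_ifs with hjN
  · rw [bidiagonal, of_apply, if_pos rfl]
    linear_combination ha j hjN
  · rw [bidiagonal, of_apply, if_pos rfl]
    linear_combination ha_last j (by omega)

end ExpKernelMatrix

theorem exp_kernel_inverse_bidiagonal_cholesky_general
    (N : ℕ) (γ : ℝ) (hγ : 0 < γ)
    (d : ℕ → ℝ) (hd : StrictMono d)
    (R : Matrix (Fin N) (Fin N) ℝ)
    (hR : ∀ i j : Fin N, R i j = Real.exp (-|d i - d j| / γ))
    (ρ : ℕ → ℝ) (hρ : ∀ k : ℕ, ρ k = Real.exp (-(d (k + 1) - d k) / γ))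
    (L : Matrix (Fin N) (Fin N) ℝ)
    (hL : ∀ i j : Fin N, L i j =
      if i = j then
        (if (i : ℕ) + 1 = N then 1 else 1 / Real.sqrt (1 - ρ i ^ 2))
      else if (i : ℕ) = (j : ℕ) + 1 then -ρ j / Real.sqrt (1 - ρ j ^ 2)
      else 0) :
    L * Lᵀ = R⁻¹ ∧
      ∀ i j : Fin N, ((i : ℕ) + 1 < (j : ℕ) ∨ (j : ℕ) + 1 < (i : ℕ)) → R⁻¹ i j = 0 := by
  set a : ℕ → ℝ := fun k => if k + 1 = N then 1 else 1 / √(1 - ρ k ^ 2)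
  set b : ℕ → ℝ := fun k => -ρ k / √(1 - ρ k ^ 2)
  obtain rfl : L = bidiagonal N a b := Matrix.ext hL
  have hρ_kernel : ∀ k, ρ k = expKernel γ (d k) (d (k + 1)) := fun k => by
    rw [hρ, expKernel_of_le (hd (Nat.lt_succ_self k)).le]
  have hρ_sq : ∀ k, 0 < 1 - ρ k ^ 2 := fun k => by
    have := hρ_kernel k ▸ expKernel_pos γ (d k) (d (k + 1))
    have := hρ_kernel k ▸ expKernel_lt_one hγ (hd (Nat.lt_succ_self k)).ne
    nlinarith
  have hinv : R⁻¹ = bidiagonal N a b * (bidiagonal N a b)ᵀ :=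
    inv_eq_mul_transpose_of_transpose_mul_mul_eq_one <|
      transpose_mul_expKernel_mul_bidiagonal_eq_one hd.monotone hR hρ_kernel
        (fun j hj => by simp only [a, b, if_neg hj.ne]; ring)
        (fun j hj => by simp only [a, if_neg hj.ne, div_pow, one_pow, Real.sq_sqrt (hρ_sq j).le,
          one_div_mul_cancel (hρ_sq j).ne'])
        (fun j hj => by simp only [a, if_pos hj, one_pow])
  exact ⟨hinv.symm, fun i j hij => hinv ▸ bidiagonal_mul_transpose_apply_eq_zero hij⟩

/-- For ordered distinct points and the exponential kernel correlation
matrix R, the lower bidiagonal matrix L̃ (diagonal 1/√(1-ρ_k²), last diagonal entry 1,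
subdiagonal -ρ_k/√(1-ρ_k²)) satisfies L̃ L̃ᵀ = R⁻¹; in particular R⁻¹ is tridiagonal. -/
theorem exp_kernel_inverse_bidiagonal_cholesky
    (N : ℕ) (hN : 1 ≤ N) (γ : ℝ) (hγ : 0 < γ)
    (d : ℕ → ℝ) (hd : StrictMono d)
    (R : Matrix (Fin N) (Fin N) ℝ)
    (hR : ∀ i j : Fin N, R i j = Real.exp (-|d i - d j| / γ))
    (ρ : ℕ → ℝ) (hρ : ∀ k : ℕ, ρ k = Real.exp (-(d (k + 1) - d k) / γ))
    (L : Matrix (Fin N) (Fin N) ℝ)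
    (hL : ∀ i j : Fin N, L i j =
      if i = j then
        (if (i : ℕ) + 1 = N then 1 else 1 / Real.sqrt (1 - ρ i ^ 2))
      else if (i : ℕ) = (j : ℕ) + 1 then -ρ j / Real.sqrt (1 - ρ j ^ 2)
      else 0) :
    L * Lᵀ = R⁻¹ ∧
      ∀ i j : Fin N, ((i : ℕ) + 1 < (j : ℕ) ∨ (j : ℕ) + 1 < (i : ℕ)) → R⁻¹ i j = 0 :=
  exp_kernel_inverse_bidiagonal_cholesky_general N γ hγ d hd R hR ρ hρ L hL
end

section
/- The exponential kernel correlation matrix R on distinct ordered points with entries R_{ij} = exp(−|d_i − d_j|/γ), γ > 0, is positive definite. -/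
/-!
For real `x, y`, `-|x - y| = 2 min x y - x - y`, so
`exp (-|x - y| / γ) = exp (-x / γ) * exp (2 min x y / γ) * exp (-y / γ)`.
Since `d` is increasing, `R` is therefore congruent, via a positive diagonal matrix, to the
matrix `a (min i j)` with `a n = exp (2 d n / γ)` strictly increasing and positive. Such a
"min-kernel" matrix factors as `Lᵀ C L`, where `L` is the upper triangular matrix of ones and `C`
is the diagonal matrix of the increments `a 0, a 1 - a 0, a 2 - a 1, …`, all positive; as `L` is
invertible, it is positive definite.
-/

open Matrix Finset Real

section Increments

variable {G : Type*} [AddCommGroup G]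

def increments (a : ℕ → G) : ℕ → G
  | 0 => a 0
  | k + 1 => a (k + 1) - a k

lemma sum_range_succ_increments (a : ℕ → G) (m : ℕ) :
    ∑ k ∈ range (m + 1), increments a k = a m := by
  induction m with
  | zero => simp [increments]
  | succ m ih => rw [sum_range_succ, ih, increments, add_sub_cancel]

lemma increments_pos [PartialOrder G] [IsOrderedAddMonoid G] {a : ℕ → G} (ha : StrictMono a)
    (h0 : 0 < a 0) (k : ℕ) : 0 < increments a k := by
  cases k with
  | zero => exact h0
  | succ k => exact sub_pos.2 (ha k.lt_succ_self)

end Increments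

section UpperOnes

variable (ι R : Type*) [LinearOrder ι]

def upperOnes [Zero R] [One R] : Matrix ι ι R :=
  of fun k i => if k ≤ i then 1 else 0

variable {ι R} [Fintype ι]

lemma isUnit_upperOnes [DecidableEq ι] [CommRing R] : IsUnit (upperOnes ι R) := by
  have hupper : (upperOnes ι R).IsUpperTriangular := fun i j hji => if_neg (not_le.2 hji)
  rw [isUnit_iff_isUnit_det, det_of_isUpperTriangular hupper]
  simp [upperOnes]

lemma upperOnes_transpose_mul_diagonal_mul_upperOnes_apply [DecidableEq ι] [CommSemiring R]
    (c : ι → R) (i j : ι) :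
    ((upperOnes ι R)ᵀ * diagonal c * upperOnes ι R) i j =
      ∑ k, if k ≤ min i j then c k else 0 := by
  rw [mul_apply]
  simp only [mul_diagonal, transpose_apply, upperOnes, of_apply, le_min_iff]
  refine sum_congr rfl fun k _ => ?_
  split_ifs <;> simp_all

end UpperOnes

lemma Fin.sum_ite_le_eq_sum_range {M : Type*} [AddCommMonoid M] {n m : ℕ} (hm : m < n)
    (f : ℕ → M) :
    ∑ k : Fin n, (if (k : ℕ) ≤ m then f k else 0) = ∑ k ∈ range (m + 1), f k := by
  rw [Fin.sum_univ_eq_sum_range (fun k => if k ≤ m then f k else 0), ← sum_filter]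
  congr 1
  ext k
  simp only [mem_filter, mem_range]
  omega

lemma posDef_apply_min_of_strictMono {a : ℕ → ℝ} (ha : StrictMono a) (h0 : 0 < a 0)
    (n : ℕ) :
    (of fun i j : Fin n => a ((min i j : Fin n) : ℕ)).PosDef := by
  have hfac : (of fun i j : Fin n => a ((min i j : Fin n) : ℕ)) =
      (upperOnes (Fin n) ℝ)ᴴ * diagonal (fun k : Fin n => increments a k) *
        upperOnes (Fin n) ℝ := by
    ext i j
    rw [conjTranspose_eq_transpose_of_trivial,
      upperOnes_transpose_mul_diagonal_mul_upperOnes_apply]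
    simp only [Fin.le_def]
    rw [Fin.sum_ite_le_eq_sum_range (min i j).isLt, sum_range_succ_increments, of_apply]
  rw [hfac]
  have hC : (diagonal fun k : Fin n => increments a k).PosDef :=
    posDef_diagonal_iff.2 fun k => increments_pos ha h0 k
  exact hC.conjTranspose_mul_mul_same (mulVec_injective_of_isUnit isUnit_upperOnes)

lemma exp_neg_abs_sub_div (x y γ : ℝ) :
    exp (-|x - y| / γ) = exp (-x / γ) * exp (2 * min x y / γ) * exp (-y / γ) := by
  rw [← exp_add, ← exp_add, ← add_div, ← add_div]
  congr 2
  linarith [max_sub_min_eq_abs' x y, min_add_max x y]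

/-- The exponential kernel correlation matrix on distinct ordered points
is positive definite. -/
theorem exp_kernel_posDef
    (N : ℕ) (γ : ℝ) (hγ : 0 < γ)
    (d : ℕ → ℝ) (hd : StrictMono d)
    (R : Matrix (Fin N) (Fin N) ℝ)
    (hR : ∀ i j : Fin N, R i j = Real.exp (-|d i - d j| / γ)) :
    R.PosDef := by
  set a : ℕ → ℝ := fun n => exp (2 * d n / γ)
  have ha : StrictMono a := fun m n hmn =>
    exp_lt_exp.2 (div_lt_div_of_pos_right (by linarith [hd hmn]) hγ)
  set D := diagonal fun i : Fin N => exp (-d i / γ)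
  have hRfac : R = Dᴴ * (of fun i j : Fin N => a ((min i j : Fin N) : ℕ)) * D := by
    ext i j
    simp [hR, D, a, exp_neg_abs_sub_div, Fin.coe_min, hd.monotone.map_min]
  have hD : IsUnit D := isUnit_diagonal.2 <| Pi.isUnit_iff.2 fun i => (exp_pos _).ne'.isUnit
  rw [hRfac]
  exact (posDef_apply_min_of_strictMono ha (exp_pos _) N).conjTranspose_mul_mul_same
    (mulVec_injective_of_isUnit hD)
end

section
/- For the exponential kernel correlation matrix R on ordered points d₁ < ... < d_N with ρ_k = exp(−(d_{k+1}−d_k)/γ), the determinant of R equals the product ∏_{k=1}^{N−1} (1 − ρ_k²). -/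
open Matrix

lemma exp_kernel_det_aux (γ : ℝ) (d : ℕ → ℝ) (hd : StrictMono d) :
    ∀ N : ℕ, (Matrix.of (fun i j : Fin N => Real.exp (-|d i - d j| / γ))).det
      = ∏ k ∈ Finset.range (N - 1), (1 - Real.exp (-(d (k + 1) - d k) / γ) ^ 2) := by
  intro N
  induction N with
  | zero => simp
  | succ n ih =>
    cases n with
    | zero => simp [Matrix.det_fin_one]
    | succ m =>
      set M : Matrix (Fin (m + 2)) (Fin (m + 2)) ℝ :=
        Matrix.of (fun i j : Fin (m + 2) => Real.exp (-|d i - d j| / γ)) with hM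
      set c : ℝ := Real.exp (-(d (m + 1) - d m) / γ) with hc
      have habs : ∀ a b : ℕ, a ≤ b → |d a - d b| = d b - d a := by
        intro a b hab
        rw [abs_sub_comm, abs_of_nonneg (sub_nonneg.2 (hd.monotone hab))]
      set lst : Fin (m + 2) := Fin.last (m + 1) with hlst
      set prv : Fin (m + 2) := ⟨m, by omega⟩ with hprv
      have hne : lst ≠ prv := by
        simp only [hlst, hprv, Fin.ne_iff_vne, Fin.val_last]; omega
      have hrow : ∀ j : Fin (m + 2),
          (M lst + (-c) • M prv) j = if j = lst then 1 - c ^ 2 else 0 := by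
        intro j
        simp only [Pi.add_apply, Pi.smul_apply, smul_eq_mul]
        by_cases hj : j = lst
        · subst hj
          rw [if_pos rfl]
          simp only [hM, Matrix.of_apply]
          have h1 : |d (lst : ℕ) - d (lst : ℕ)| = 0 := by simp
          have h2 : |d (prv : ℕ) - d (lst : ℕ)| = d (m + 1) - d m := by
            have : (prv : ℕ) ≤ (lst : ℕ) := by simp [hprv, hlst]
            rw [habs _ _ this]
            simp [hprv, hlst]
          rw [h1, h2]
          simp [hc]
          ring
        · have hjle : (j : ℕ) ≤ m := by
            have := j.isLt
            simp only [hlst, Fin.ne_iff_vne, Fin.val_last] at hj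
            omega
          rw [if_neg hj]
          simp only [hM, Matrix.of_apply]
          have h1 : |d (lst : ℕ) - d (j : ℕ)| = d (m + 1) - d (j : ℕ) := by
            rw [abs_of_nonneg (sub_nonneg.2 (hd.monotone (by simp [hlst]; omega)))]
            simp [hlst]
          have h2 : |d (prv : ℕ) - d (j : ℕ)| = d m - d (j : ℕ) := by
            rw [abs_of_nonneg (sub_nonneg.2 (hd.monotone (by simp [hprv]; omega)))]
          rw [h1, h2, hc]
          rw [show -(d (m + 1) - d (j : ℕ)) / γ
              = -(d (m + 1) - d m) / γ + -(d m - d (j : ℕ)) / γ by ring,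
            Real.exp_add]
          ring
      have hdet : M.det = (M.updateRow lst (M lst + (-c) • M prv)).det :=
        (Matrix.det_updateRow_add_smul_self M hne (-c)).symm
      rw [hdet, Matrix.det_succ_row _ lst]
      rw [Finset.sum_eq_single lst]
      · rw [Matrix.updateRow_self]
        rw [hrow lst, if_pos rfl]
        have hsub : ((M.updateRow lst (M lst + (-c) • M prv)).submatrix
              lst.succAbove lst.succAbove)
            = Matrix.of (fun i j : Fin (m + 1) =>
                Real.exp (-|d i - d j| / γ)) := by
          ext i j
          simp only [Matrix.submatrix_apply, hlst, Fin.succAbove_last]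
          rw [Matrix.updateRow_ne (by exact (Fin.castSucc_lt_last i).ne)]
          simp [hM]
        rw [hsub, ih]
        have hsign : ((-1 : ℝ)) ^ ((lst : ℕ) + (lst : ℕ)) = 1 := by
          simp [hlst]
        rw [hsign]
        simp only [Nat.add_sub_cancel]
        rw [Finset.prod_range_succ, ← hc]
        ring
      · intro j _ hj
        rw [Matrix.updateRow_self, hrow j, if_neg hj]
        ring
      · intro h; exact absurd (Finset.mem_univ lst) h

/-- det R = ∏_{k=1}^{N-1} (1 - ρ_k²) for the exponential kernel
correlation matrix on ordered points. -/
theorem exp_kernel_det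
    (N : ℕ) (γ : ℝ) (hγ : 0 < γ)
    (d : ℕ → ℝ) (hd : StrictMono d)
    (R : Matrix (Fin N) (Fin N) ℝ)
    (hR : ∀ i j : Fin N, R i j = Real.exp (-|d i - d j| / γ))
    (ρ : ℕ → ℝ) (hρ : ∀ k : ℕ, ρ k = Real.exp (-(d (k + 1) - d k) / γ)) :
    R.det = ∏ k ∈ Finset.range (N - 1), (1 - ρ k ^ 2) := by
  have hR' : R = Matrix.of (fun i j : Fin N => Real.exp (-|d i - d j| / γ)) := by
    ext i j; exact hR i j
  rw [hR', exp_kernel_det_aux γ d hd N]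
  exact Finset.prod_congr rfl fun k _ => by rw [hρ k]
end

section
/- Orthogonal projection marginal likelihood factorization: under the model Y = A Z + E with AᵀA = I_d and A_c an n₁×(n₁−d) matrix whose columns complete A to an orthonormal basis of ℝ^{n₁}, the marginal density of Y (after integrating out Z) factors as p(Y) = ∏_{l=1}^{d} 𝒩(Yᵀa_l; 0, Σ_l + σ₀²I_{n₂}) · ∏_{l=1}^{n₁−d} 𝒩(Yᵀa_{c,l}; 0, σ₀²I_{n₂}). -/
open Matrix MeasureTheory

/-- Multivariate normal density with mean 0 and covariance S, evaluated at x. -/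
noncomputable def mvnPdf {n : ℕ} (S : Matrix (Fin n) (Fin n) ℝ) (x : Fin n → ℝ) : ℝ :=
  (Real.sqrt ((2 * Real.pi) ^ n * S.det))⁻¹ * Real.exp (-(x ⬝ᵥ S⁻¹ *ᵥ x) / 2)

/-- Univariate normal density with mean 0 and variance q, evaluated at x. -/
noncomputable def gpdf (q x : ℝ) : ℝ :=
  (Real.sqrt (2 * Real.pi * q))⁻¹ * Real.exp (-(x ^ 2) / (2 * q))

/-- Joint density of (Z, Y) under the model Y = A Z + E: the rows Z_l are independent
N(0, Σ_l) and the entries of E = Y - A Z are i.i.d. N(0, σ₀²). -/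
noncomputable def jointPdfLMC {n₁ d n₂ : ℕ} (A : Matrix (Fin n₁) (Fin d) ℝ)
    (S : Fin d → Matrix (Fin n₂) (Fin n₂) ℝ) (σ02 : ℝ)
    (Z : Matrix (Fin d) (Fin n₂) ℝ) (Y : Matrix (Fin n₁) (Fin n₂) ℝ) : ℝ :=
  (∏ l : Fin d, mvnPdf (S l) (Z l)) * ∏ i : Fin n₁, ∏ j : Fin n₂, gpdf σ02 ((Y - A * Z) i j)

/-! Rotating by the orthogonal matrix `[A, A_c]` leaves the isotropic noise density unchanged,
so in the coordinates `W = AᵀY`, `V = A_cᵀY` the joint density splits into `d` independent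
problems `W_l = Z_l + E_l` and the pure noise `V`. Integrating `Z_l` out is the convolution
`N(0, Σ_l) * N(0, σ₀²I) = N(0, Σ_l + σ₀²I)`: completing the square in `z` with
`Q = Σ_l⁻¹ + (σ₀²I)⁻¹` leaves a Gaussian integral `∫ exp (-zᵀQz/2) = √((2π)ⁿ / det Q)`,
computed by writing `Q = BᵀB` and changing variables. -/

open Real
open scoped MatrixOrder

theorem Real.sqrt_pow {x : ℝ} (hx : 0 ≤ x) (n : ℕ) : √(x ^ n) = √x ^ n := by
  rw [← sqrt_sq (by positivity : 0 ≤ √x ^ n), ← pow_mul, mul_comm, pow_mul, sq_sqrt hx]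

theorem integral_exp_neg_dotProduct_self_div_two (ι : Type*) [Fintype ι] :
    ∫ x : ι → ℝ, exp (-(x ⬝ᵥ x) / 2) = √(2 * π) ^ Fintype.card ι := by
  have hprod : ∀ x : ι → ℝ, exp (-(x ⬝ᵥ x) / 2) = ∏ i, exp (-(1 / 2) * x i ^ 2) := by
    intro x
    rw [← exp_sum, dotProduct, ← Finset.sum_neg_distrib, Finset.sum_div]
    exact congrArg exp (Finset.sum_congr rfl fun i _ => by ring)
  simp_rw [hprod]
  rw [integral_fintype_prod_volume_eq_pow (fun t : ℝ => exp (-(1 / 2) * t ^ 2)),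
    integral_gaussian]
  norm_num [div_div_eq_mul_div, mul_comm]

theorem integral_exp_neg_dotProduct_mulVec_div_two {ι : Type*} [Fintype ι] [DecidableEq ι]
    {Q : Matrix ι ι ℝ} (hQ : Q.PosDef) :
    ∫ x : ι → ℝ, exp (-(x ⬝ᵥ Q *ᵥ x) / 2) = √((2 * π) ^ Fintype.card ι / Q.det) := by
  obtain ⟨B, rfl⟩ := CStarAlgebra.nonneg_iff_eq_star_mul_self.mp hQ.posSemidef.nonneg
  have hdet : (star B * B).det = B.det ^ 2 := by
    rw [det_mul, star_eq_conjTranspose, det_conjTranspose, star_trivial, sq]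
  have hB : B.det ≠ 0 := fun h => by simpa [hdet, h] using hQ.det_pos
  have hquad : ∀ x, x ⬝ᵥ (star B * B) *ᵥ x = B *ᵥ x ⬝ᵥ B *ᵥ x := fun x => by
    rw [← mulVec_mulVec, dotProduct_mulVec, star_eq_conjTranspose,
      conjTranspose_eq_transpose_of_trivial, vecMul_transpose]
  have hmap : Measure.map (toLin' B) volume = ENNReal.ofReal |B.det⁻¹| • volume := by
    rw [Real.map_linearMap_volume_pi_eq_smul_volume_pi (by rwa [LinearMap.det_toLin']),
      LinearMap.det_toLin']
  let g : (ι → ℝ) → ℝ := fun u => exp (-(u ⬝ᵥ u) / 2)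
  calc ∫ x : ι → ℝ, exp (-(x ⬝ᵥ (star B * B) *ᵥ x) / 2)
      = ∫ x : ι → ℝ, g (toLin' B x) := by simp_rw [hquad, toLin'_apply, g]
    _ = ∫ u, g u ∂(Measure.map (toLin' B) volume) :=
      (integral_map (toLin' B).continuous_of_finiteDimensional.aemeasurable
        (by fun_prop)).symm
    _ = |B.det⁻¹| * √(2 * π) ^ Fintype.card ι := by
      rw [hmap, integral_smul_measure, ENNReal.toReal_ofReal (abs_nonneg _), smul_eq_mul,
        integral_exp_neg_dotProduct_self_div_two]
    _ = √((2 * π) ^ Fintype.card ι / (star B * B).det) := by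
      rw [hdet, sqrt_div' _ (by positivity), sqrt_sq_eq_abs, Real.sqrt_pow (by positivity),
        abs_inv, div_eq_inv_mul]

theorem Matrix.IsSymm.dotProduct_mulVec_comm {n : Type*} [Fintype n] {M : Matrix n n ℝ}
    (hM : M.IsSymm) (a b : n → ℝ) : a ⬝ᵥ M *ᵥ b = b ⬝ᵥ M *ᵥ a := by
  rw [dotProduct_mulVec, ← mulVec_transpose, hM.eq, dotProduct_comm]

theorem dotProduct_mulVec_add_sub_eq {n : Type*} [Fintype n] [DecidableEq n]
    {P R : Matrix n n ℝ} (hP : P.IsSymm) (hR : R.IsSymm) (hPR : IsUnit (P + R)) (z w : n → ℝ) :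
    z ⬝ᵥ P *ᵥ z + (w - z) ⬝ᵥ R *ᵥ (w - z) =
      (z - (P + R)⁻¹ *ᵥ R *ᵥ w) ⬝ᵥ (P + R) *ᵥ (z - (P + R)⁻¹ *ᵥ R *ᵥ w)
        + w ⬝ᵥ (R - R * (P + R)⁻¹ * R) *ᵥ w := by
  set Q := P + R
  set m := Q⁻¹ *ᵥ R *ᵥ w
  have hQm : Q *ᵥ m = R *ᵥ w := by
    rw [mulVec_mulVec, mul_nonsing_inv Q ((isUnit_iff_isUnit_det Q).mp hPR), one_mulVec]
  have hmQm : m ⬝ᵥ Q *ᵥ m = w ⬝ᵥ (R * Q⁻¹ * R) *ᵥ w := by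
    rw [hQm, ← mulVec_mulVec, ← mulVec_mulVec, hR.dotProduct_mulVec_comm w]
  have hzQm : z ⬝ᵥ Q *ᵥ m = z ⬝ᵥ R *ᵥ w := by rw [hQm]
  have hmQz : m ⬝ᵥ Q *ᵥ z = z ⬝ᵥ R *ᵥ w := by
    rw [(hP.add hR).dotProduct_mulVec_comm, hzQm]
  have hwRz : w ⬝ᵥ R *ᵥ z = z ⬝ᵥ R *ᵥ w := hR.dotProduct_mulVec_comm w z
  simp only [mulVec_sub, sub_mulVec, dotProduct_sub, sub_dotProduct] at *
  simp only [Q, add_mulVec, dotProduct_add] at hmQz hzQm hmQm ⊢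
  linarith

section SumOfInverses

variable {n : Type*} [Fintype n] [DecidableEq n] {S T : Matrix n n ℝ}

theorem Matrix.mul_inv_add_inv_mul (hS : IsUnit S) (hT : IsUnit T) :
    S * (S⁻¹ + T⁻¹) * T = S + T := by
  rw [mul_add, add_mul, mul_nonsing_inv S ((isUnit_iff_isUnit_det S).mp hS), one_mul,
    mul_assoc, nonsing_inv_mul T ((isUnit_iff_isUnit_det T).mp hT), mul_one, add_comm]

theorem Matrix.inv_add_eq_sub (hS : IsUnit S) (hT : IsUnit T) (hST : IsUnit (S⁻¹ + T⁻¹)) :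
    (S + T)⁻¹ = T⁻¹ - T⁻¹ * (S⁻¹ + T⁻¹)⁻¹ * T⁻¹ := by
  have hQ := (isUnit_iff_isUnit_det _).mp hST
  calc (S + T)⁻¹ = T⁻¹ * (S⁻¹ + T⁻¹)⁻¹ * S⁻¹ := by
        rw [← mul_inv_add_inv_mul hS hT, mul_inv_rev, mul_inv_rev, mul_assoc]
    _ = T⁻¹ * (S⁻¹ + T⁻¹)⁻¹ * ((S⁻¹ + T⁻¹) - T⁻¹) := by rw [add_sub_cancel_right]
    _ = T⁻¹ - T⁻¹ * (S⁻¹ + T⁻¹)⁻¹ * T⁻¹ := by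
        rw [mul_sub, mul_assoc, nonsing_inv_mul _ hQ, mul_one]

end SumOfInverses

theorem mvnPdf_mul_mvnPdf_sub {n : ℕ} {S T : Matrix (Fin n) (Fin n) ℝ} (hS : S.PosDef)
    (hT : T.PosDef) (z w : Fin n → ℝ) :
    mvnPdf S z * mvnPdf T (w - z) =
      (√((2 * π) ^ n / (S⁻¹ + T⁻¹).det))⁻¹ * mvnPdf (S + T) w
        * exp (-((z - (S⁻¹ + T⁻¹)⁻¹ *ᵥ T⁻¹ *ᵥ w) ⬝ᵥ (S⁻¹ + T⁻¹) *ᵥ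
            (z - (S⁻¹ + T⁻¹)⁻¹ *ᵥ T⁻¹ *ᵥ w)) / 2) := by
  have hQ : (S⁻¹ + T⁻¹).PosDef := hS.inv.add hT.inv
  have hdet : (S + T).det = S.det * (S⁻¹ + T⁻¹).det * T.det := by
    rw [← mul_inv_add_inv_mul hS.isUnit hT.isUnit, det_mul, det_mul]
  have hexp := dotProduct_mulVec_add_sub_eq (isHermitian_iff_isSymm.mp hS.inv.isHermitian)
    (isHermitian_iff_isSymm.mp hT.inv.isHermitian) hQ.isUnit z w
  rw [← inv_add_eq_sub hS.isUnit hT.isUnit hQ.isUnit] at hexp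
  have hconst : √((2 * π) ^ n * S.det) * √((2 * π) ^ n * T.det) =
      √((2 * π) ^ n / (S⁻¹ + T⁻¹).det) * √((2 * π) ^ n * (S + T).det) := by
    have := hS.det_pos
    have := hT.det_pos
    have := hQ.det_pos
    rw [← sqrt_mul (by positivity), ← sqrt_mul (by positivity), hdet]
    congr 1
    field_simp
  unfold mvnPdf
  calc (√((2 * π) ^ n * S.det))⁻¹ * exp (-(z ⬝ᵥ S⁻¹ *ᵥ z) / 2)
        * ((√((2 * π) ^ n * T.det))⁻¹ * exp (-((w - z) ⬝ᵥ T⁻¹ *ᵥ (w - z)) / 2))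
      = (√((2 * π) ^ n * S.det) * √((2 * π) ^ n * T.det))⁻¹
          * exp (-(z ⬝ᵥ S⁻¹ *ᵥ z + (w - z) ⬝ᵥ T⁻¹ *ᵥ (w - z)) / 2) := by
        rw [mul_inv, neg_add, add_div, exp_add]; ring
    _ = _ := by
        rw [hconst, hexp, neg_add, add_div, exp_add, mul_inv]; ring

theorem integral_mvnPdf_mul_mvnPdf_sub {n : ℕ} {S T : Matrix (Fin n) (Fin n) ℝ}
    (hS : S.PosDef) (hT : T.PosDef) (w : Fin n → ℝ) :
    ∫ z, mvnPdf S z * mvnPdf T (w - z) = mvnPdf (S + T) w := by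
  have hQ : (S⁻¹ + T⁻¹).PosDef := hS.inv.add hT.inv
  have hnorm_pos : 0 < √((2 * π) ^ n / (S⁻¹ + T⁻¹).det) := sqrt_pos.mpr (by
    have := hQ.det_pos
    positivity)
  simp_rw [mvnPdf_mul_mvnPdf_sub hS hT _ w]
  rw [integral_const_mul,
    integral_sub_right_eq_self (fun x => exp (-(x ⬝ᵥ (S⁻¹ + T⁻¹) *ᵥ x) / 2)),
    integral_exp_neg_dotProduct_mulVec_div_two hQ, Fintype.card_fin]
  field_simp

theorem mvnPdf_smul_one {n : ℕ} {c : ℝ} (hc : 0 < c) (x : Fin n → ℝ) :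
    mvnPdf (c • (1 : Matrix (Fin n) (Fin n) ℝ)) x = ∏ j, gpdf c (x j) := by
  have := invertibleOfNonzero hc.ne'
  have hquad : x ⬝ᵥ (c • (1 : Matrix (Fin n) (Fin n) ℝ))⁻¹ *ᵥ x = (∑ j, x j ^ 2) / c := by
    rw [inv_smul _ _ (by simp), inv_one, smul_mulVec, one_mulVec, dotProduct_smul, smul_eq_mul,
      invOf_eq_inv, inv_mul_eq_div, dotProduct]
    simp only [sq]
  rw [mvnPdf, det_smul, det_one, mul_one, Fintype.card_fin, ← mul_pow,
    Real.sqrt_pow (by positivity), hquad]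
  simp only [gpdf, Finset.prod_mul_distrib, Finset.prod_const, Finset.card_univ, Fintype.card_fin,
    inv_pow, ← exp_sum, neg_div, Finset.sum_neg_distrib, Finset.sum_div, div_div, mul_assoc,
    mul_comm c 2]

section IsotropicNoise

variable {m n k k' : Type*} [Fintype m] [Fintype n] [Fintype k] [Fintype k']

theorem prod_prod_gpdf (c : ℝ) (M : Matrix m n ℝ) :
    ∏ i, ∏ j, gpdf c (M i j) =
      (√(2 * π * c))⁻¹ ^ (Fintype.card m * Fintype.card n) * exp (-(Mᵀ * M).trace / (2 * c)) := by
  simp only [gpdf, Finset.prod_mul_distrib, Finset.prod_const, Finset.card_univ, ← exp_sum,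
    ← pow_mul, trace, diag, mul_apply, transpose_apply, ← sq, neg_div, Finset.sum_neg_distrib,
    Finset.sum_div]
  rw [Finset.sum_comm, mul_comm (Fintype.card n)]

theorem trace_transpose_mul_self_eq_add [DecidableEq m] {R : Type*} [CommRing R]
    {A : Matrix m k R} {B : Matrix m k' R} (hAB : A * Aᵀ + B * Bᵀ = 1) (M : Matrix m n R) :
    (Mᵀ * M).trace = ((Aᵀ * M)ᵀ * (Aᵀ * M)).trace + ((Bᵀ * M)ᵀ * (Bᵀ * M)).trace := by
  calc (Mᵀ * M).trace = (Mᵀ * (A * Aᵀ + B * Bᵀ) * M).trace := by rw [hAB, Matrix.mul_one]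
    _ = _ := by
      simp only [transpose_mul, transpose_transpose, Matrix.mul_add, Matrix.add_mul, trace_add,
        Matrix.mul_assoc]

theorem prod_prod_gpdf_eq_mul_of_mul_transpose_add [DecidableEq m] {A : Matrix m k ℝ}
    {B : Matrix m k' ℝ} (hcard : Fintype.card m = Fintype.card k + Fintype.card k')
    (hAB : A * Aᵀ + B * Bᵀ = 1) (c : ℝ) (M : Matrix m n ℝ) :
    ∏ i, ∏ j, gpdf c (M i j) =
      (∏ l, ∏ j, gpdf c ((Aᵀ * M) l j)) * ∏ l, ∏ j, gpdf c ((Bᵀ * M) l j) := by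
  rw [prod_prod_gpdf, prod_prod_gpdf, prod_prod_gpdf, trace_transpose_mul_self_eq_add hAB,
    hcard, add_mul, pow_add, neg_add, add_div, exp_add]
  ring

end IsotropicNoise

theorem Matrix.transpose_mul_apply_eq_mulVec {m n k R : Type*} [Fintype m] [CommSemiring R]
    (A : Matrix m k R) (Y : Matrix m n R) (l : k) :
    (Aᵀ * Y) l = Yᵀ *ᵥ fun i => A i l := by
  ext j
  simp [mul_apply, mulVec, dotProduct, mul_comm]

theorem jointPdfLMC_of_eq_prod_mvnPdf {n₁ d n₂ : ℕ} (hdn : d ≤ n₁)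
    {A : Matrix (Fin n₁) (Fin d) ℝ} (hA : Aᵀ * A = 1) {Ac : Matrix (Fin n₁) (Fin (n₁ - d)) ℝ}
    (hAAc : Aᵀ * Ac = 0) (hcomplete : A * Aᵀ + Ac * Acᵀ = 1)
    (S : Fin d → Matrix (Fin n₂) (Fin n₂) ℝ) {σ02 : ℝ} (hσ02 : 0 < σ02)
    (Z : Fin d → Fin n₂ → ℝ) (Y : Matrix (Fin n₁) (Fin n₂) ℝ) :
    jointPdfLMC A S σ02 (of Z) Y =
      (∏ l, mvnPdf (S l) (Z l) * mvnPdf (σ02 • 1) ((Aᵀ * Y) l - Z l))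
        * ∏ l, mvnPdf (σ02 • 1) ((Acᵀ * Y) l) := by
  have hAcA : Acᵀ * A = 0 := by rw [← transpose_transpose A, ← transpose_mul, hAAc, transpose_zero]
  have hcard : Fintype.card (Fin n₁) = Fintype.card (Fin d) + Fintype.card (Fin (n₁ - d)) := by
    simp only [Fintype.card_fin]
    omega
  rw [jointPdfLMC, prod_prod_gpdf_eq_mul_of_mul_transpose_add hcard hcomplete, Matrix.mul_sub,
    Matrix.mul_sub, ← Matrix.mul_assoc, ← Matrix.mul_assoc, hA, hAcA, Matrix.one_mul,
    Matrix.zero_mul, sub_zero, Finset.prod_mul_distrib, mul_assoc]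
  simp only [mvnPdf_smul_one hσ02, Matrix.sub_apply, Pi.sub_apply, of_apply]
  rfl

theorem gppca_marginal_likelihood_factorization_general
    (n₁ d n₂ : ℕ) (hdn : d ≤ n₁)
    (A : Matrix (Fin n₁) (Fin d) ℝ) (hA : Aᵀ * A = 1)
    (Ac : Matrix (Fin n₁) (Fin (n₁ - d)) ℝ)
    (hAAc : Aᵀ * Ac = 0) (hcomplete : A * Aᵀ + Ac * Acᵀ = 1)
    (S : Fin d → Matrix (Fin n₂) (Fin n₂) ℝ) (hS : ∀ l, (S l).PosDef)
    (σ02 : ℝ) (hσ02 : 0 < σ02) :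
    ∀ Y : Matrix (Fin n₁) (Fin n₂) ℝ,
      (∫ Z' : Fin d → Fin n₂ → ℝ, jointPdfLMC A S σ02 (Matrix.of Z') Y) =
        (∏ l : Fin d,
          mvnPdf (S l + σ02 • (1 : Matrix (Fin n₂) (Fin n₂) ℝ)) (Yᵀ *ᵥ fun i => A i l)) *
        ∏ l : Fin (n₁ - d),
          mvnPdf (σ02 • (1 : Matrix (Fin n₂) (Fin n₂) ℝ)) (Yᵀ *ᵥ fun i => Ac i l) := by
  intro Y
  have hnoise : (σ02 • (1 : Matrix (Fin n₂) (Fin n₂) ℝ)).PosDef := PosDef.one.smul hσ02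
  simp_rw [jointPdfLMC_of_eq_prod_mvnPdf hdn hA hAAc hcomplete S hσ02]
  rw [integral_mul_const, integral_fintype_prod_volume_eq_prod
    (fun l z => mvnPdf (S l) z * mvnPdf (σ02 • 1) ((Aᵀ * Y) l - z))]
  simp only [integral_mvnPdf_mul_mvnPdf_sub (hS _) hnoise, transpose_mul_apply_eq_mulVec]

/-- Orthogonal projection marginal likelihood factorization. Under
Y = A Z + E with AᵀA = I_d and A_c completing A to an orthonormal basis of ℝ^{n₁},
the marginal density of Y (after integrating out Z) is
∏_{l=1}^{d} N(Yᵀa_l; 0, Σ_l + σ₀²I) ∏_{l=1}^{n₁-d} N(Yᵀa_{c,l}; 0, σ₀²I). -/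
theorem gppca_marginal_likelihood_factorization
    (n₁ d n₂ : ℕ) (hd1 : 1 ≤ d) (hdn : d ≤ n₁) (hn2 : 1 ≤ n₂)
    (A : Matrix (Fin n₁) (Fin d) ℝ) (hA : Aᵀ * A = 1)
    (Ac : Matrix (Fin n₁) (Fin (n₁ - d)) ℝ) (hAc : Acᵀ * Ac = 1)
    (hAAc : Aᵀ * Ac = 0) (hcomplete : A * Aᵀ + Ac * Acᵀ = 1)
    (S : Fin d → Matrix (Fin n₂) (Fin n₂) ℝ) (hS : ∀ l, (S l).PosDef)
    (σ02 : ℝ) (hσ02 : 0 < σ02) :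
    ∀ Y : Matrix (Fin n₁) (Fin n₂) ℝ,
      (∫ Z' : Fin d → Fin n₂ → ℝ, jointPdfLMC A S σ02 (Matrix.of Z') Y) =
        (∏ l : Fin d,
          mvnPdf (S l + σ02 • (1 : Matrix (Fin n₂) (Fin n₂) ℝ)) (Yᵀ *ᵥ fun i => A i l)) *
        ∏ l : Fin (n₁ - d),
          mvnPdf (σ02 • (1 : Matrix (Fin n₂) (Fin n₂) ℝ)) (Yᵀ *ᵥ fun i => Ac i l) :=
  gppca_marginal_likelihood_factorization_general n₁ d n₂ hdn A hA Ac hAAc hcomplete S hS σ02 hσ02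
end
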